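/- arXiv:1612.01174 — 3 statements merged into one kernel-verified Lean document; each statement's English description precedes it below -/
import Mathlib

section
/- Let α > 0 be real and G : ℝ → ℝ any function. If the sequence (x_n)_{n≥0} satisfies x_n = ∑_{k=0}^{n-1} (n-k)^{α-1} G(x_k) for all n ≥ 1 (with x_0 given), then for all n ≥ 1 it satisfies the fractional difference equation ∑_{k=0}^{n} (-1)^k C(α,k) x_{n-k} = (-1)^n C(α,n) x_0 + ∑_{k=0}^{n-1} G(x_{n-k-1}) A(α-1, k). -/
noncomputable def genBinom (α : ℝ) (n : ℕ) : ℝ :=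
  (∏ k ∈ Finset.range n, (α - k)) / (n.factorial : ℝ)

noncomputable def eulerA (α : ℝ) (k : ℕ) : ℝ :=
  ∑ j ∈ Finset.range (k + 1),
    (-1 : ℝ) ^ j * genBinom (α + 1) j * (((k + 1 - j : ℕ) : ℝ)) ^ α

/-! Substituting the memory map into the fractional difference turns its left side into a
triple convolution `c * w * (G ∘ x)` with `c k = (-1)^k C(α,k)` and `w m = m^(α-1)`;
regrouping it as `(c * w) * (G ∘ x)` produces the Eulerian numbers `A(α-1,k) = (c * w)(k+1)`. -/

open Finset

/-- Associativity of truncated convolutions on `ℕ`. -/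
theorem sum_range_mul_sum_range_sub_comm {R : Type*} [CommSemiring R] (c w g : ℕ → R) (n : ℕ) :
    ∑ k ∈ range n, c k * ∑ j ∈ range (n - k), w (n - k - j) * g j
      = ∑ m ∈ range n, g (n - 1 - m) * ∑ k ∈ range (m + 1), c k * w (m + 1 - k) := by
  have swapped : ∑ k ∈ range n, ∑ j ∈ range (n - k), c k * (w (n - k - j) * g j)
      = ∑ j ∈ range n, ∑ k ∈ range (n - j), c k * (w (n - k - j) * g j) :=
    sum_comm' fun k j => by simp only [mem_range]; omega
  simp_rw [mul_sum, swapped]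
  rw [← sum_range_reflect]
  refine sum_congr rfl fun m hm => ?_
  have hm : m < n := mem_range.mp hm
  rw [show n - (n - 1 - m) = m + 1 by omega]
  refine sum_congr rfl fun k _ => ?_
  rw [show m + 1 - k = n - k - (n - 1 - m) by omega]
  ring

theorem memory_map_implies_frac_diff_general (α : ℝ) (G : ℝ → ℝ) (x : ℕ → ℝ)
    (hx : ∀ n : ℕ, 1 ≤ n → x n = ∑ k ∈ Finset.range n, ((n - k : ℕ) : ℝ) ^ (α - 1) * G (x k)) :
    ∀ n : ℕ, 1 ≤ n →
      ∑ k ∈ Finset.range (n + 1), (-1 : ℝ) ^ k * genBinom α k * x (n - k)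
        = (-1 : ℝ) ^ n * genBinom α n * x 0
          + ∑ k ∈ Finset.range n, G (x (n - k - 1)) * eulerA (α - 1) k := by
  intro n _
  rw [sum_range_succ, Nat.sub_self, add_comm]
  congr 1
  calc ∑ k ∈ range n, (-1 : ℝ) ^ k * genBinom α k * x (n - k)
      = ∑ k ∈ range n, (-1 : ℝ) ^ k * genBinom α k *
          ∑ j ∈ range (n - k), ((n - k - j : ℕ) : ℝ) ^ (α - 1) * G (x j) :=
        sum_congr rfl fun k hk => by rw [hx (n - k) (by simp at hk; omega)]
    _ = ∑ m ∈ range n, G (x (n - 1 - m)) * eulerA (α - 1) m := by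
        rw [sum_range_mul_sum_range_sub_comm (fun k => (-1 : ℝ) ^ k * genBinom α k)
          (fun m => ((m : ℕ) : ℝ) ^ (α - 1)) (fun j => G (x j))]
        simp only [eulerA, sub_add_cancel]
    _ = _ := by simp only [Nat.sub_right_comm n 1]

theorem memory_map_implies_frac_diff (α : ℝ) (hα : 0 < α) (G : ℝ → ℝ) (x : ℕ → ℝ)
    (hx : ∀ n : ℕ, 1 ≤ n → x n = ∑ k ∈ Finset.range n, ((n - k : ℕ) : ℝ) ^ (α - 1) * G (x k)) :
    ∀ n : ℕ, 1 ≤ n →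
      ∑ k ∈ Finset.range (n + 1), (-1 : ℝ) ^ k * genBinom α k * x (n - k)
        = (-1 : ℝ) ^ n * genBinom α n * x 0
          + ∑ k ∈ Finset.range n, G (x (n - k - 1)) * eulerA (α - 1) k :=
  memory_map_implies_frac_diff_general α G x hx
end

section
/- Conversely, let α > 0 be real and G : ℝ → ℝ any function. If a sequence (x_n)_{n≥0} satisfies ∑_{k=0}^{n} (-1)^k C(α,k) x_{n-k} = (-1)^n C(α,n) x_0 + ∑_{k=0}^{n-1} G(x_{n-k-1}) A(α-1, k) for all n ≥ 1, then x_n = ∑_{k=0}^{n-1} (n-k)^{α-1} G(x_k) for all n ≥ 1. -/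
/-!
The memory map `y n = ∑_{k<n} (n - k)^(α-1) G (x k)` itself satisfies the fractional
difference equation, with `y 0 = 0`: exchanging the two sums in `∑_k (-1)^k C(α,k) y (n-k)`
leaves, as the coefficient of `G (x j)`, exactly the fractional Eulerian number
`A(α-1, n-1-j)`. Since `C(α,0) = 1`, the equation is a unit lower-triangular system for
`x 1, x 2, …` given `x 0`, so `x` and `y` agree from index `1` on.
-/

open Finset

noncomputable def powerMemory (α : ℝ) (g : ℕ → ℝ) (n : ℕ) : ℝ :=
  ∑ k ∈ range n, ((n - k : ℕ) : ℝ) ^ (α - 1) * g k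

@[simp]
lemma genBinom_zero (α : ℝ) : genBinom α 0 = 1 := by
  simp [genBinom]

lemma eulerA_sub_one (α : ℝ) (m : ℕ) :
    eulerA (α - 1) m
      = ∑ k ∈ range (m + 1), (-1 : ℝ) ^ k * genBinom α k * ((m + 1 - k : ℕ) : ℝ) ^ (α - 1) := by
  simp only [eulerA, sub_add_cancel]

lemma powerMemory_zero (α : ℝ) (g : ℕ → ℝ) : powerMemory α g 0 = 0 := by
  simp [powerMemory]

lemma sum_genBinom_mul_powerMemory (α : ℝ) (g : ℕ → ℝ) (n : ℕ) :
    ∑ k ∈ range (n + 1), (-1 : ℝ) ^ k * genBinom α k * powerMemory α g (n - k)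
      = ∑ k ∈ range n, g (n - k - 1) * eulerA (α - 1) k := by
  rw [sum_range_succ, Nat.sub_self, powerMemory_zero, mul_zero, add_zero]
  simp only [powerMemory, mul_sum]
  rw [sum_comm' (t' := range n) (s' := fun j => range (n - j)) (by simp only [mem_range]; omega),
    ← sum_range_reflect _ n]
  refine sum_congr rfl fun j hj => ?_
  rw [mem_range] at hj
  rw [show n - (n - 1 - j) = j + 1 by omega, show n - 1 - j = n - j - 1 by omega, eulerA_sub_one,
    mul_sum]
  refine sum_congr rfl fun k hk => ?_
  rw [mem_range] at hk
  rw [show n - k - (n - j - 1) = j + 1 - k by omega]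
  ring

lemma eq_of_sum_range_mul_sub_eq {R : Type*} [Ring R] {c u v : ℕ → R} (hc : c 0 = 1)
    (h : ∀ n, 1 ≤ n → ∑ k ∈ range n, c k * u (n - k) = ∑ k ∈ range n, c k * v (n - k)) :
    ∀ n, 1 ≤ n → u n = v n := by
  intro n
  induction n using Nat.strong_induction_on with
  | _ n ih =>
    intro hn
    obtain ⟨m, rfl⟩ : ∃ m, n = m + 1 := ⟨n - 1, by omega⟩
    have hlower : ∑ k ∈ range m, c (k + 1) * u (m + 1 - (k + 1))
        = ∑ k ∈ range m, c (k + 1) * v (m + 1 - (k + 1)) := by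
      refine sum_congr rfl fun k hk => ?_
      rw [mem_range] at hk
      rw [ih _ (by omega) (by omega)]
    have hm := h (m + 1) (by omega)
    rw [sum_range_succ', sum_range_succ', hlower, hc] at hm
    simpa using hm

theorem frac_diff_implies_memory_map_general (α : ℝ) (G : ℝ → ℝ) (x : ℕ → ℝ)
    (hx : ∀ n : ℕ, 1 ≤ n →
      ∑ k ∈ Finset.range (n + 1), (-1 : ℝ) ^ k * genBinom α k * x (n - k)
        = (-1 : ℝ) ^ n * genBinom α n * x 0
          + ∑ k ∈ Finset.range n, G (x (n - k - 1)) * eulerA (α - 1) k) :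
    ∀ n : ℕ, 1 ≤ n →
      x n = ∑ k ∈ Finset.range n, ((n - k : ℕ) : ℝ) ^ (α - 1) * G (x k) := by
  refine eq_of_sum_range_mul_sub_eq (c := fun k => (-1 : ℝ) ^ k * genBinom α k)
    (v := powerMemory α (fun k => G (x k))) (by simp) fun n hn => ?_
  have hxn := hx n hn
  have hyn := sum_genBinom_mul_powerMemory α (fun k => G (x k)) n
  rw [sum_range_succ, Nat.sub_self] at hxn hyn
  rw [powerMemory_zero, mul_zero, add_zero] at hyn
  linarith

theorem frac_diff_implies_memory_map (α : ℝ) (hα : 0 < α) (G : ℝ → ℝ) (x : ℕ → ℝ)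
    (hx : ∀ n : ℕ, 1 ≤ n →
      ∑ k ∈ Finset.range (n + 1), (-1 : ℝ) ^ k * genBinom α k * x (n - k)
        = (-1 : ℝ) ^ n * genBinom α n * x 0
          + ∑ k ∈ Finset.range n, G (x (n - k - 1)) * eulerA (α - 1) k) :
    ∀ n : ℕ, 1 ≤ n →
      x n = ∑ k ∈ Finset.range n, ((n - k : ℕ) : ℝ) ^ (α - 1) * G (x k) :=
  frac_diff_implies_memory_map_general α G x hx
end

section
/- Riemann sum convergence of the memory map to the fractional integral: let α > 0, G : ℝ → ℝ continuous, and x : [a, t] → ℝ continuous. Then as h → 0+ with nh = t - a fixed, (h^α/Γ(α)) ∑_{k=0}^{n-1} (n-k)^{α-1} G(x(a + kh)) converges to (1/Γ(α)) ∫_a^t (t-τ)^{α-1} G(x(τ)) dτ. -/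
/-!
With `h = (t - a) / n` one has `t - (a + k h) = (n - k) h`, so `h ^ α (n - k) ^ (α - 1)` equals
`h (t - (a + k h)) ^ (α - 1)` and the memory sum is the left Riemann sum of
`f τ = (t - τ) ^ (α - 1) G (x τ)`, i.e. the integral of `f` evaluated at the grid point just left
of `τ`. These step functions converge to `f` on `(a, t)`, and since the kernel is monotone they are
dominated by `C ((t - τ) ^ (α - 1) + (t - a) ^ (α - 1))`, which is integrable because `α > 0`.
Dominated convergence finishes the proof.
-/

open Filter MeasureTheory Set Finset Topology
open scoped Interval

noncomputable section

def gridFloor (a h τ : ℝ) : ℝ := a + ⌊(τ - a) / h⌋₊ * h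

def leftRiemannSum {E : Type*} [AddCommGroup E] [Module ℝ E] (f : ℝ → E) (a b : ℝ) (n : ℕ) : E :=
  ((b - a) / n) • ∑ k ∈ range n, f (a + k * ((b - a) / n))

section gridFloor

variable {a h τ : ℝ}

theorem le_gridFloor (hh : 0 ≤ h) : a ≤ gridFloor a h τ :=
  le_add_of_nonneg_right (mul_nonneg (Nat.cast_nonneg _) hh)

theorem gridFloor_le (hh : 0 < h) (hτ : a ≤ τ) : gridFloor a h τ ≤ τ := by
  have := Nat.floor_le (div_nonneg (sub_nonneg.2 hτ) hh.le)
  rw [le_div_iff₀ hh] at this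
  rw [gridFloor]
  linarith

theorem sub_lt_gridFloor (hh : 0 < h) : τ - h < gridFloor a h τ := by
  have := Nat.lt_floor_add_one ((τ - a) / h)
  rw [div_lt_iff₀ hh] at this
  rw [gridFloor]
  linarith

theorem gridFloor_eq_of_mem_Ico (hh : 0 < h) {k : ℕ} (hτ : τ ∈ Ico (a + k * h) (a + (k + 1) * h)) :
    gridFloor a h τ = a + k * h := by
  have hk : ⌊(τ - a) / h⌋₊ = k := by
    rw [Nat.floor_eq_iff (div_nonneg (by nlinarith [hτ.1]) hh.le), le_div_iff₀ hh,
      div_lt_iff₀ hh]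
    constructor <;> linarith [hτ.1, hτ.2]
  rw [gridFloor, hk]

theorem stronglyMeasurable_comp_gridFloor {E : Type*} [TopologicalSpace E] (f : ℝ → E) (a h : ℝ) :
    StronglyMeasurable fun τ => f (gridFloor a h τ) :=
  (StronglyMeasurable.of_discrete (f := fun k : ℕ => f (a + k * h))).comp_measurable
    ((measurable_id.sub_const a).div_const h).nat_floor

theorem tendsto_gridFloor {ι : Type*} {l : Filter ι} {h : ι → ℝ} (hτ : a ≤ τ)
    (hpos : ∀ᶠ i in l, 0 < h i) (hlim : Tendsto h l (𝓝 0)) :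
    Tendsto (fun i => gridFloor a (h i) τ) l (𝓝 τ) := by
  have hlow : Tendsto (fun i => τ - h i) l (𝓝 τ) := by
    simpa using tendsto_const_nhds.sub hlim
  refine tendsto_of_tendsto_of_tendsto_of_le_of_le' hlow tendsto_const_nhds ?_ ?_
  · filter_upwards [hpos] with i hi using (sub_lt_gridFloor hi).le
  · filter_upwards [hpos] with i hi using gridFloor_le hi hτ

variable {E : Type*} [NormedAddCommGroup E] [NormedSpace ℝ E] [CompleteSpace E]

theorem integral_comp_gridFloor (f : ℝ → E) (hh : 0 < h) (n : ℕ) :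
    ∫ τ in a..a + n * h, f (gridFloor a h τ) = h • ∑ k ∈ range n, f (a + k * h) := by
  have hpiece (k : ℕ) : EqOn (fun τ => f (gridFloor a h τ)) (fun _ => f (a + k * h))
      (Ioo (a + k * h) (a + (k + 1 : ℕ) * h)) := fun τ hτ => by
    push_cast at hτ
    simp only [gridFloor_eq_of_mem_Ico hh (Ioo_subset_Ico_self hτ)]
  have hle (k : ℕ) : a + k * h ≤ a + (k + 1 : ℕ) * h := by gcongr; omega
  have hint (k : ℕ) (_ : k < n) :
      IntervalIntegrable (fun τ => f (gridFloor a h τ)) volume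
        (a + k * h) (a + (k + 1 : ℕ) * h) := by
    rw [intervalIntegrable_iff_integrableOn_Ioo_of_le (hle k)]
    exact (integrableOn_const measure_Ioo_lt_top.ne).congr_fun (hpiece k).symm measurableSet_Ioo
  have hsum := intervalIntegral.sum_integral_adjacent_intervals hint
  simp only [Nat.cast_zero, zero_mul, add_zero] at hsum
  rw [← hsum, Finset.smul_sum]
  refine Finset.sum_congr rfl fun k _ => ?_
  rw [intervalIntegral.integral_congr_Ioo_of_le (hle k) (hpiece k), intervalIntegral.integral_const]
  congr 1
  push_cast
  ring

end gridFloor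

theorem leftRiemannSum_eq_integral_comp_gridFloor {E : Type*} [NormedAddCommGroup E]
    [NormedSpace ℝ E] [CompleteSpace E] (f : ℝ → E) {a b : ℝ} (hab : a < b) {n : ℕ} (hn : 0 < n) :
    leftRiemannSum f a b n = ∫ τ in a..b, f (gridFloor a ((b - a) / n) τ) := by
  have hb : a + n * ((b - a) / n) = b := by field_simp; ring
  rw [leftRiemannSum, ← integral_comp_gridFloor f (div_pos (sub_pos.2 hab) (by exact_mod_cast hn)),
    hb]

/-- Since `gridFloor` rounds `τ` down into `[a, τ]`, the domination `‖f s‖ ≤ g τ` for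
`a ≤ s ≤ τ < b` bounds the step functions `f ∘ gridFloor`; it allows an integrable singularity of
`f` at `b`. -/
theorem tendsto_leftRiemannSum {E : Type*} [NormedAddCommGroup E] [NormedSpace ℝ E]
    [CompleteSpace E] {f : ℝ → E} {g : ℝ → ℝ} {a b : ℝ} (hab : a < b)
    (hf : ContinuousOn f (Ioo a b)) (hg : IntegrableOn g (Ioo a b))
    (hfg : ∀ τ ∈ Ioo a b, ∀ s ∈ Icc a τ, ‖f s‖ ≤ g τ) :
    Tendsto (leftRiemannSum f a b) atTop (𝓝 (∫ τ in a..b, f τ)) := by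
  have hmesh_pos : ∀ᶠ n : ℕ in atTop, 0 < (b - a) / n :=
    (eventually_gt_atTop 0).mono fun n hn => div_pos (sub_pos.2 hab) (by exact_mod_cast hn)
  have hmesh : Tendsto (fun n : ℕ => (b - a) / n) atTop (𝓝 0) :=
    tendsto_const_div_atTop_nhds_zero_nat _
  have hIoo : ∀ᵐ τ, τ ∈ Ι a b → τ ∈ Ioo a b := by
    filter_upwards [Measure.ae_ne volume b] with τ hτb hτ
    rw [uIoc_of_le hab.le] at hτ
    exact ⟨hτ.1, lt_of_le_of_ne hτ.2 hτb⟩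
  have hbound : ∀ᶠ n : ℕ in atTop,
      ∀ᵐ τ, τ ∈ Ι a b → ‖f (gridFloor a ((b - a) / n) τ)‖ ≤ g τ := by
    filter_upwards [hmesh_pos] with n hn
    filter_upwards [hIoo] with τ hτ hτ'
    exact hfg τ (hτ hτ') _ ⟨le_gridFloor hn.le, gridFloor_le hn (hτ hτ').1.le⟩
  have hlim : ∀ᵐ τ, τ ∈ Ι a b →
      Tendsto (fun n : ℕ => f (gridFloor a ((b - a) / n) τ)) atTop (𝓝 (f τ)) := by
    filter_upwards [hIoo] with τ hτ hτ'
    obtain ⟨hτa, hτb⟩ := hτ hτ'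
    exact (hf.continuousAt (Ioo_mem_nhds hτa hτb)).tendsto.comp
      (tendsto_gridFloor hτa.le hmesh_pos hmesh)
  refine (intervalIntegral.tendsto_integral_filter_of_dominated_convergence g
    (.of_forall fun n => (stronglyMeasurable_comp_gridFloor f a _).aestronglyMeasurable) hbound
    ((intervalIntegrable_iff_integrableOn_Ioo_of_le hab.le).2 hg) hlim).congr' ?_
  filter_upwards [eventually_gt_atTop 0] with n hn
  exact (leftRiemannSum_eq_integral_comp_gridFloor f hab hn).symm

theorem Real.rpow_le_rpow_add_rpow {u v w : ℝ} (p : ℝ) (hu : 0 < u) (huv : u ≤ v) (hvw : v ≤ w) :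
    v ^ p ≤ u ^ p + w ^ p := by
  rcases le_total 0 p with hp | hp
  · linarith [Real.rpow_le_rpow (hu.le.trans huv) hvw hp, Real.rpow_nonneg hu.le p]
  · linarith [Real.rpow_le_rpow_of_nonpos hu huv hp,
      Real.rpow_nonneg (hu.le.trans (huv.trans hvw)) p]

theorem rpow_mul_sum_eq_leftRiemannSum {a t : ℝ} (hat : a < t) (α : ℝ) (g : ℝ → ℝ) (n : ℕ) :
    ((t - a) / n) ^ α * ∑ k ∈ range n, ((n - k : ℕ) : ℝ) ^ (α - 1) * g (a + k * ((t - a) / n)) =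
      leftRiemannSum (fun τ => (t - τ) ^ (α - 1) * g τ) a t n := by
  rw [leftRiemannSum, smul_eq_mul, Finset.mul_sum, Finset.mul_sum]
  refine Finset.sum_congr rfl fun k hk => ?_
  have hkn : k < n := Finset.mem_range.1 hk
  have hh : 0 < (t - a) / n := div_pos (sub_pos.2 hat) (by exact_mod_cast k.zero_le.trans_lt hkn)
  have hnode : t - (a + k * ((t - a) / n)) = ((n - k : ℕ) : ℝ) * ((t - a) / n) := by
    rw [Nat.cast_sub hkn.le]
    field_simp [(show (n : ℝ) ≠ 0 by exact_mod_cast (k.zero_le.trans_lt hkn).ne')]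
    ring
  rw [hnode, Real.mul_rpow (Nat.cast_nonneg _) hh.le, Real.rpow_sub_one hh.ne']
  generalize (t - a) / n = h at hh ⊢
  field_simp

theorem memory_map_riemann_sum_limit (α a t : ℝ) (hα : 0 < α) (hat : a < t)
    (G : ℝ → ℝ) (hG : Continuous G) (x : ℝ → ℝ) (hx : ContinuousOn x (Set.Icc a t)) :
    Tendsto
      (fun n : ℕ =>
        (((t - a) / n) ^ α / Real.Gamma α) *
          ∑ k ∈ Finset.range n,
            ((n - k : ℕ) : ℝ) ^ (α - 1) * G (x (a + k * ((t - a) / n))))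
      atTop
      (nhds ((1 / Real.Gamma α) * ∫ τ in a..t, (t - τ) ^ (α - 1) * G (x τ))) := by
  obtain ⟨C, hC⟩ := isCompact_Icc.exists_bound_of_continuousOn (hG.comp_continuousOn hx)
  have hf : ContinuousOn (fun τ => (t - τ) ^ (α - 1) * G (x τ)) (Ioo a t) :=
    ((continuousOn_const.sub continuousOn_id).rpow_const fun τ hτ =>
      Or.inl (sub_ne_zero.2 hτ.2.ne')).mul (hG.comp_continuousOn (hx.mono Ioo_subset_Icc_self))
  have hg : IntegrableOn (fun τ => C * ((t - τ) ^ (α - 1) + (t - a) ^ (α - 1))) (Ioo a t) := by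
    have hkernel : IntervalIntegrable (fun τ => (t - τ) ^ (α - 1)) volume a t := by
      simpa using (intervalIntegral.intervalIntegrable_rpow' (by linarith : -1 < α - 1)
        (a := 0) (b := t - a)).comp_sub_left t |>.symm
    exact (((intervalIntegrable_iff_integrableOn_Ioo_of_le hat.le).1 hkernel).add
      (integrableOn_const measure_Ioo_lt_top.ne)).const_mul C
  have hfg : ∀ τ ∈ Ioo a t, ∀ s ∈ Icc a τ,
      ‖(t - s) ^ (α - 1) * G (x s)‖ ≤ C * ((t - τ) ^ (α - 1) + (t - a) ^ (α - 1)) := by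
    intro τ hτ s hs
    rw [norm_mul, Real.norm_of_nonneg (Real.rpow_nonneg (by linarith [hs.2, hτ.2]) _), mul_comm]
    exact mul_le_mul (hC s ⟨hs.1, hs.2.trans hτ.2.le⟩)
      (Real.rpow_le_rpow_add_rpow _ (by linarith [hτ.2]) (by linarith [hs.2]) (by linarith [hs.1]))
      (Real.rpow_nonneg (by linarith [hs.2, hτ.2]) _)
      ((norm_nonneg _).trans (hC a ⟨le_rfl, hat.le⟩))
  convert (tendsto_leftRiemannSum hat hf hg hfg).const_mul (1 / Real.Gamma α) using 2 with n
  rw [← rpow_mul_sum_eq_leftRiemannSum hat]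
  ring
end
end
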